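/- Let t, t' be terms with t ▷* t'. If an occurrence x_[i'] of the free variable x in t' is a residue of an occurrence x_[i] of x in t and x_[i'] is pure in t', then x_[i] is pure in t. -/
import Mathlib


/-! ## A de Bruijn presentation of the untyped λ-calculus -/

/-- Untyped λ-terms in de Bruijn representation. -/
inductive Lam : Type where
  | var : ℕ → Lam
  | app : Lam → Lam → Lam
  | abs : Lam → Lam
  deriving DecidableEq

namespace Lam

/-- Lifting of de Bruijn indices (cutoff `d`). -/
def lift (d : ℕ) : Lam → Lam
  | var n => if n < d then var n else var (n + 1)
  | app a b => app (lift d a) (lift d b)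
  | abs a => abs (lift (d + 1) a)

/-- Capture-avoiding substitution of `u` for the free variable `k`. -/
def subst : Lam → ℕ → Lam → Lam
  | var n, k, u => if n = k then u else if k < n then var (n - 1) else var n
  | app a b, k, u => app (subst a k u) (subst b k u)
  | abs a, k, u => abs (subst a (k + 1) (lift 0 u))

/-- One-step β-reduction `▷`. -/
inductive Step : Lam → Lam → Prop
  | beta (a b : Lam) : Step (app (abs a) b) (subst a 0 b)
  | appL {a a' : Lam} (b : Lam) : Step a a' → Step (app a b) (app a' b)
  | appR (a : Lam) {b b' : Lam} : Step b b' → Step (app a b) (app a b')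
  | abs {a a' : Lam} : Step a a' → Step (Lam.abs a) (Lam.abs a')

/-- β-reduction `▷*` : reflexive and transitive closure of `▷`. -/
def Steps : Lam → Lam → Prop := Relation.ReflTransGen Step

/-- β-normal term. -/
def Normal (t : Lam) : Prop := ∀ t', ¬ Step t t'

/-- `Free x t` : the variable `x` (de Bruijn index, seen from the root) occurs free in `t`. -/
def Free : ℕ → Lam → Prop
  | x, var n => x = n
  | x, app a b => Free x a ∨ Free x b
  | x, abs a => Free (x + 1) a

/-- Closed term. -/
def Closed (t : Lam) : Prop := ∀ x, ¬ Free x t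

/-- A variable applied to a (possibly empty) list of arguments. -/
inductive HeadVarApp : Lam → Prop
  | var (n : ℕ) : HeadVarApp (var n)
  | app {a : Lam} (b : Lam) : HeadVarApp a → HeadVarApp (app a b)

/-- Head normal forms `λx₁…λxₙ.(y t₁ … tₘ)`. -/
inductive IsHNF : Lam → Prop
  | head {t : Lam} : HeadVarApp t → IsHNF t
  | abs {a : Lam} : IsHNF a → IsHNF (Lam.abs a)

/-- A term is solvable if it β-reduces to a head normal form. -/
def Solvable (t : Lam) : Prop := ∃ h, Steps t h ∧ IsHNF h

/-- `Ω = (λx.(x x))(λx.(x x))`. -/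
def Omega : Lam := app (abs (app (var 0) (var 0))) (abs (app (var 0) (var 0)))

/-- Ω-reduction `▷_Ω` : replace an unsolvable subterm by `Ω`. -/
inductive OmegaStep : Lam → Lam → Prop
  | unsolv {t : Lam} : ¬ Solvable t → OmegaStep t Omega
  | appL {a a' : Lam} (b : Lam) : OmegaStep a a' → OmegaStep (app a b) (app a' b)
  | appR (a : Lam) {b b' : Lam} : OmegaStep b b' → OmegaStep (app a b) (app a b')
  | abs {a a' : Lam} : OmegaStep a a' → OmegaStep (Lam.abs a) (Lam.abs a')

/-- `▷_Ω*`. -/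
def OmegaSteps : Lam → Lam → Prop := Relation.ReflTransGen OmegaStep

/-- `▷_{βΩ}` : union of `▷` and `▷_Ω`. -/
def BOStep (t t' : Lam) : Prop := Step t t' ∨ OmegaStep t t'

/-- `▷_{βΩ}*`. -/
def BOSteps : Lam → Lam → Prop := Relation.ReflTransGen BOStep

/-- `u ≃ v` : equality in the λ-theory H (common `▷_{βΩ}*`-reduct). -/
def SimH (u v : Lam) : Prop := ∃ w, BOSteps u w ∧ BOSteps v w

/-- Simultaneous (parallel) substitution along `σ`. -/
def psubst (σ : ℕ → Lam) : Lam → Lam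
  | var n => σ n
  | app a b => app (psubst σ a) (psubst σ b)
  | abs a => abs (psubst (fun n => match n with | 0 => var 0 | m + 1 => lift 0 (σ m)) a)

/-- `(x V)` : the application of a head `h` to a list of arguments. -/
def mkApps (h : Lam) (as : List Lam) : Lam := as.foldl app h

/-- `U ⊑ V` : some initial segment of `V` is obtained from `U` by a substitution
followed by componentwise β-reductions. -/
def Sqsubseteq (U V : List Lam) : Prop :=
  ∃ (σ : ℕ → Lam) (W : List Lam), W <+: V ∧
    List.Forall₂ (fun u w => Steps (psubst σ u) w) U W

/-! ### Occurrences as positions -/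

/-- Directions inside a term. -/
inductive Dir : Type where
  | left | right | down
  deriving DecidableEq

/-- Positions (occurrences) in a term. -/
abbrev Pos := List Dir

/-- The subterm of `t` at position `p` (if any). -/
def subtermAt : Lam → Pos → Option Lam
  | t, [] => some t
  | app a _, Dir.left :: p => subtermAt a p
  | app _ b, Dir.right :: p => subtermAt b p
  | abs a, Dir.down :: p => subtermAt a p
  | _, _ :: _ => none

/-- Replace the subterm of `t` at position `p` by `s` (if the position exists). -/
def replaceAt : Lam → Pos → Lam → Option Lam
  | _, [], s => some s
  | app a b, Dir.left :: p, s => (replaceAt a p s).map (fun a' => app a' b)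
  | app a b, Dir.right :: p, s => (replaceAt b p s).map (fun b' => app a b')
  | abs a, Dir.down :: p, s => (replaceAt a p s).map Lam.abs
  | _, _ :: _, _ => none

/-- `OccOf x t p` : position `p` is an occurrence in `t` of the free variable `x`
(index seen from the root, hence shifted by the number of binders crossed). -/
def OccOf (x : ℕ) (t : Lam) (p : Pos) : Prop :=
  subtermAt t p = some (var (x + p.count Dir.down))

/-- `ArgOf t p V` : `V` is the maximal list of arguments, in `t`, of the occurrence
sitting at position `p`; i.e. `([] V)` is the applicative context of that occurrence. -/
def ArgOf (t : Lam) (p : Pos) (V : List Lam) : Prop :=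
  ∃ (q : Pos) (h : Lam),
    p = q ++ List.replicate V.length Dir.left ∧
    (∀ q' : Pos, q ≠ q' ++ [Dir.left]) ∧
    subtermAt t q = some (mkApps h V) ∧ subtermAt t p = some h

/-- `InArgOfOcc x t p q` : `q` is an occurrence of `x` in `t` and the position `p` lies
inside one of the elements of `Arg(x_[q], t)`. -/
def InArgOfOcc (x : ℕ) (t : Lam) (p q : Pos) : Prop :=
  OccOf x t q ∧ ∃ (r : Pos) (n : ℕ),
    q = r ++ List.replicate n Dir.left ∧
    (∀ r' : Pos, r ≠ r' ++ [Dir.left]) ∧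
    ∃ (j : ℕ) (s : Pos), j < n ∧ p = r ++ List.replicate j Dir.left ++ Dir.right :: s

/-- The occurrence `p` of `x` is pure in `t` : no other occurrence `q` of `x` in `t`
is such that `p` occurs in one of the elements of `Arg(x_[q], t)`. -/
def PureOcc (x : ℕ) (t : Lam) (p : Pos) : Prop :=
  OccOf x t p ∧ ∀ q, q ≠ p → ¬ InArgOfOcc x t p q

/-- Renaming of the free variable `y` into `x`. -/
def rename (y x : ℕ) : Lam → Lam
  | var n => if n = y then var x else var n
  | app a b => app (rename y x a) (rename y x b)
  | abs a => abs (rename (y + 1) (x + 1) a)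

/-- `Residue x u v p p'` : along some β-reduction from `u` to `v`, the occurrence `p'` of
`x` in `v` is a residue (traced copy) of the occurrence `p` of `x` in `u`.  This is
expressed by marking the occurrence `p` of `x` with a fresh variable `y` and tracing the
occurrences of `y`. -/
def Residue (x : ℕ) (u v : Lam) (p p' : Pos) : Prop :=
  ∃ (y : ℕ) (u₀ v₀ : Lam),
    ¬ Free y u ∧
    replaceAt u p (var (y + p.count Dir.down)) = some u₀ ∧
    Steps u₀ v₀ ∧ rename y x v₀ = v ∧ OccOf y v₀ p'

/-- The occurrence `p` of the free variable `0` ("x") in `G` is good with respect to the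
closed term `A` : it is pure in `G` and `u[x:=A]` is solvable for every subterm `u` of
`G` in which this occurrence occurs. -/
def GoodOcc (A G : Lam) (p : Pos) : Prop :=
  PureOcc 0 G p ∧
    ∀ (q : Pos) (u : Lam), q <+: p → subtermAt G q = some u →
      Solvable (subst u (q.count Dir.down) A)

/-! ### Miscellaneous -/

/-- A fixed effective Gödel numbering of λ-terms. -/
def code : Lam → ℕ
  | var n => Nat.pair 0 n
  | app a b => Nat.pair 1 (Nat.pair (code a) (code b))
  | abs a => Nat.pair 2 (code a)

/-- Body `f^k z` of the Church numeral. -/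
def churchBody : ℕ → Lam
  | 0 => var 0
  | k + 1 => app (var 1) (churchBody k)

/-- The Church numeral `c_k = λf λz.(f^k z)`. -/
def church (k : ℕ) : Lam := abs (abs (churchBody k))

/-- `n`-fold abstraction `λx₁…λxₙ.t`. -/
def absN : ℕ → Lam → Lam
  | 0, t => t
  | n + 1, t => abs (absN n t)

/-- Number of symbols of a term. -/
def size : Lam → ℕ
  | var _ => 1
  | app a b => size a + size b + 1
  | abs a => size a + 1

/-- Subterm relation. -/
inductive Subterm : Lam → Lam → Prop
  | refl (t : Lam) : Subterm t t
  | appL {s a : Lam} (b : Lam) : Subterm s a → Subterm s (app a b)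
  | appR (a : Lam) {s b : Lam} : Subterm s b → Subterm s (app a b)
  | abs {s a : Lam} : Subterm s a → Subterm s (Lam.abs a)

/-- `t` contains no subterm of the form `(x u)` for the free variable `x`. -/
def NoVarApp : ℕ → Lam → Prop
  | _, var _ => True
  | x, app a b => a ≠ var x ∧ NoVarApp x a ∧ NoVarApp x b
  | x, abs a => NoVarApp (x + 1) a

/-- Headed by the variable `d` : term of the form `(x V)` with `x = var d`. -/
inductive Headed : ℕ → Lam → Prop
  | var (d : ℕ) : Headed d (var d)
  | app {d : ℕ} {a : Lam} (b : Lam) : Headed d a → Headed d (app a b)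

end Lam

namespace LamAux

open Lam

/-- Guard predicate: every free occurrence of `y` lies inside an argument of an
application headed by the free variable `x`. -/
def Guard (x y : ℕ) : Lam → Prop
  | .var n => n ≠ y
  | .app a b => Headed x a ∨ (Guard x y a ∧ Guard x y b)
  | .abs a => Guard (x + 1) (y + 1) a

lemma headed_lift {x d : ℕ} {a : Lam} (h : Headed x a) (hd : d ≤ x) :
    Headed (x + 1) (lift d a) := by
  induction h with
  | var => simp [lift, Nat.not_lt_of_le hd]; exact Headed.var _
  | app b _ ih => exact Headed.app _ ih

lemma headed_subst {x k : ℕ} {a u : Lam} (h : Headed (x + 1) a) (hk : k ≤ x) :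
    Headed x (subst a k u) := by
  induction h with
  | var =>
      have h1 : x + 1 ≠ k := by omega
      have h2 : k < x + 1 := by omega
      simp [subst, h1, h2]; exact Headed.var _
  | app b _ ih => exact Headed.app _ ih

lemma headed_step {x : ℕ} {a a' : Lam} (hs : Step a a') (h : Headed x a) :
    Headed x a' := by
  induction hs with
  | beta a b => cases h with | app _ h' => cases h'
  | appL b _ ih => cases h with | app _ h' => exact Headed.app _ (ih h')
  | appR a _ => cases h with | app _ h' => exact Headed.app _ h'
  | abs _ => cases h

lemma guard_lift {x y d : ℕ} {a : Lam} (hx : d ≤ x) (hy : d ≤ y)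
    (h : Guard x y a) : Guard (x + 1) (y + 1) (lift d a) := by
  induction a generalizing x y d with
  | var n =>
      simp only [Guard] at h
      simp only [lift]
      split <;> simp only [Guard] <;> omega
  | app a b iha ihb =>
      cases h with
      | inl h => exact Or.inl (headed_lift h hx)
      | inr h => exact Or.inr ⟨iha hx hy h.1, ihb hx hy h.2⟩
  | abs a ih =>
      exact ih (Nat.succ_le_succ hx) (Nat.succ_le_succ hy) h

lemma guard_subst {x y k : ℕ} {a u : Lam} (hx : k ≤ x) (hy : k ≤ y)
    (ha : Guard (x + 1) (y + 1) a) (hu : Guard x y u) :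
    Guard x y (subst a k u) := by
  induction a generalizing x y k u with
  | var n =>
      simp only [Guard] at ha
      simp only [subst]
      split
      · exact hu
      · split <;> simp only [Guard] <;> omega
  | app a b iha ihb =>
      cases ha with
      | inl h => exact Or.inl (headed_subst h hx)
      | inr h => exact Or.inr ⟨iha hx hy h.1 hu, ihb hx hy h.2 hu⟩
  | abs a ih =>
      exact ih (Nat.succ_le_succ hx) (Nat.succ_le_succ hy) ha
        (guard_lift (Nat.zero_le _) (Nat.zero_le _) hu)

lemma guard_step {x y : ℕ} {t t' : Lam} (hs : Step t t') (h : Guard x y t) :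
    Guard x y t' := by
  induction hs generalizing x y with
  | beta a b =>
      cases h with
      | inl h => cases h
      | inr h => exact guard_subst (Nat.zero_le _) (Nat.zero_le _) h.1 h.2
  | appL b _ ih =>
      cases h with
      | inl h => exact Or.inl (headed_step (by assumption) h)
      | inr h => exact Or.inr ⟨ih h.1, h.2⟩
  | appR a _ ih =>
      cases h with
      | inl h => exact Or.inl h
      | inr h => exact Or.inr ⟨h.1, ih h.2⟩
  | abs _ ih => exact ih h

lemma guard_steps {x y : ℕ} {t t' : Lam} (hs : Steps t t') (h : Guard x y t) :
    Guard x y t' := by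
  induction hs with
  | refl => exact h
  | tail _ hstep ih => exact guard_step hstep ih

lemma guard_of_not_free {y : ℕ} {t : Lam} (h : ¬ Free y t) (x : ℕ) :
    Guard x y t := by
  induction t generalizing x y with
  | var n => simp only [Free] at h; simp only [Guard]; omega
  | app a b iha ihb =>
      simp only [Free] at h
      push_neg at h
      exact Or.inr ⟨iha h.1 x, ihb h.2 x⟩
  | abs a ih =>
      simp only [Free] at h
      exact ih h (x + 1)

lemma occ_free {x : ℕ} {t : Lam} {p : Pos} (h : OccOf x t p) : Free x t := by
  induction t generalizing x p with
  | var n =>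
      cases p with
      | nil => simp [OccOf, subtermAt] at h; simp [Free, h]
      | cons d q => cases d <;> simp [OccOf, subtermAt] at h
  | app a b iha ihb =>
      cases p with
      | nil => simp [OccOf, subtermAt] at h
      | cons d q =>
          cases d with
          | left =>
              refine Or.inl (iha (x := x) (p := q) ?_)
              simpa [OccOf, subtermAt, List.count_cons] using h
          | right =>
              refine Or.inr (ihb (x := x) (p := q) ?_)
              simpa [OccOf, subtermAt, List.count_cons] using h
          | down => simp [OccOf, subtermAt] at h
  | abs a ih =>
      cases p with
      | nil => simp [OccOf, subtermAt] at h
      | cons d q =>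
          cases d with
          | left => simp [OccOf, subtermAt] at h
          | right => simp [OccOf, subtermAt] at h
          | down =>
              refine ih (x := x + 1) (p := q) ?_
              simp only [OccOf, subtermAt] at h ⊢
              rw [h]
              congr 1
              simp [List.count_cons]
              omega

lemma subtermAt_append (r w : Pos) (t : Lam) :
    subtermAt t (r ++ w) = (subtermAt t r).bind (fun c => subtermAt c w) := by
  induction r generalizing t with
  | nil => simp [subtermAt]
  | cons d r ih =>
      cases t with
      | var n => cases d <;> simp [subtermAt]
      | app a b => cases d <;> simp [subtermAt, ih]
      | abs a => cases d <;> simp [subtermAt, ih]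

lemma replace_split {r w : Pos} {t v u₀ : Lam}
    (h : replaceAt t (r ++ w) v = some u₀) :
    ∃ c c', subtermAt t r = some c ∧ replaceAt c w v = some c' ∧
      replaceAt t r c' = some u₀ := by
  induction r generalizing t u₀ with
  | nil => exact ⟨t, u₀, by simp [subtermAt], h, by simp [replaceAt]⟩
  | cons d r ih =>
      cases t with
      | var n => cases d <;> simp [replaceAt] at h
      | app a b =>
          cases d with
          | left =>
              simp only [List.cons_append, replaceAt, Option.map_eq_some_iff] at h
              obtain ⟨a', ha', rfl⟩ := h
              obtain ⟨c, c', h1, h2, h3⟩ := ih ha'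
              exact ⟨c, c', h1, h2, by simp [replaceAt, h3]⟩
          | right =>
              simp only [List.cons_append, replaceAt, Option.map_eq_some_iff] at h
              obtain ⟨b', hb', rfl⟩ := h
              obtain ⟨c, c', h1, h2, h3⟩ := ih hb'
              exact ⟨c, c', h1, h2, by simp [replaceAt, h3]⟩
          | down => simp [replaceAt] at h
      | abs a =>
          cases d with
          | down =>
              simp only [List.cons_append, replaceAt, Option.map_eq_some_iff] at h
              obtain ⟨a', ha', rfl⟩ := h
              obtain ⟨c, c', h1, h2, h3⟩ := ih ha'
              exact ⟨c, c', h1, h2, by simp [replaceAt, h3]⟩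
          | left => simp [replaceAt] at h
          | right => simp [replaceAt] at h

lemma headed_of_spine {X m : ℕ} {a : Lam}
    (h : subtermAt a (List.replicate m Dir.left) = some (var X)) :
    Headed X a := by
  induction m generalizing a with
  | zero =>
      simp [subtermAt] at h
      subst h; exact Headed.var _
  | succ m ih =>
      cases a with
      | var n => simp [List.replicate_succ, subtermAt] at h
      | abs a => simp [List.replicate_succ, subtermAt] at h
      | app a b =>
          simp only [List.replicate_succ, subtermAt] at h
          exact Headed.app _ (ih h)

lemma headed_spine {X : ℕ} {a : Lam} (h : Headed X a) :
    ∃ m, subtermAt a (List.replicate m Dir.left) = some (var X) := by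
  induction h with
  | var => exact ⟨0, rfl⟩
  | app b _ ih =>
      obtain ⟨m, hm⟩ := ih
      exact ⟨m + 1, by simpa [List.replicate_succ, subtermAt] using hm⟩

lemma spine_replace {X : ℕ} : ∀ {j n : ℕ} {c c' v : Lam} {s : Pos},
    j < n →
    subtermAt c (List.replicate n Dir.left) = some (var X) →
    replaceAt c (List.replicate j Dir.left ++ Dir.right :: s) v = some c' →
    ∃ A B, c' = app A B ∧ Headed X A := by
  intro j
  induction j with
  | zero =>
      intro n c c' v s hj hsub hrep
      cases c with
      | var m => simp [replaceAt] at hrep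
      | abs a => simp [replaceAt] at hrep
      | app a b =>
          simp only [List.replicate, List.nil_append, replaceAt,
            Option.map_eq_some_iff] at hrep
          obtain ⟨b', _, rfl⟩ := hrep
          obtain ⟨n', rfl⟩ : ∃ n', n = n' + 1 := ⟨n - 1, by omega⟩
          simp only [List.replicate_succ, subtermAt] at hsub
          exact ⟨a, b', rfl, headed_of_spine hsub⟩
  | succ j ih =>
      intro n c c' v s hj hsub hrep
      cases c with
      | var m => simp [List.replicate_succ, replaceAt] at hrep
      | abs a => simp [List.replicate_succ, replaceAt] at hrep
      | app a b =>
          simp only [List.replicate_succ, List.cons_append, replaceAt,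
            Option.map_eq_some_iff] at hrep
          obtain ⟨a', ha', rfl⟩ := hrep
          obtain ⟨n', rfl⟩ : ∃ n', n = n' + 1 := ⟨n - 1, by omega⟩
          simp only [List.replicate_succ, subtermAt] at hsub
          obtain ⟨A, B, rfl, hA⟩ := ih (by omega) hsub ha'
          exact ⟨app A B, b, rfl, Headed.app _ hA⟩

lemma guard_replace : ∀ (r : Pos) {t c' u₀ : Lam} {x y : ℕ},
    replaceAt t r c' = some u₀ → ¬ Free y t →
    Guard (x + r.count Dir.down) (y + r.count Dir.down) c' →
    Guard x y u₀ := by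
  intro r
  induction r with
  | nil =>
      intro t c' u₀ x y hrep _ hg
      simp only [replaceAt, Option.some_inj] at hrep
      subst hrep
      simpa using hg
  | cons d r ih =>
      intro t c' u₀ x y hrep hfree hg
      cases t with
      | var n => cases d <;> simp [replaceAt] at hrep
      | app a b =>
          simp only [Free] at hfree
          push_neg at hfree
          cases d with
          | left =>
              simp only [replaceAt, Option.map_eq_some_iff] at hrep
              obtain ⟨a', ha', rfl⟩ := hrep
              refine Or.inr ⟨ih ha' hfree.1 ?_, guard_of_not_free hfree.2 x⟩
              simpa [List.count_cons] using hg
          | right =>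
              simp only [replaceAt, Option.map_eq_some_iff] at hrep
              obtain ⟨b', hb', rfl⟩ := hrep
              refine Or.inr ⟨guard_of_not_free hfree.1 x, ih hb' hfree.2 ?_⟩
              simpa [List.count_cons] using hg
          | down => simp [replaceAt] at hrep
      | abs a =>
          simp only [Free] at hfree
          cases d with
          | down =>
              simp only [replaceAt, Option.map_eq_some_iff] at hrep
              obtain ⟨a', ha', rfl⟩ := hrep
              show Guard (x + 1) (y + 1) a'
              refine ih ha' hfree ?_
              have : ∀ z : ℕ, z + (Dir.down :: r).count Dir.down
                  = z + 1 + r.count Dir.down := by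
                intro z; simp [List.count_cons]; omega
              rw [this x, this y] at hg
              exact hg
          | left => simp [replaceAt] at hrep
          | right => simp [replaceAt] at hrep

lemma replicate_left_ne (m j : ℕ) (s : Pos) :
    List.replicate m Dir.left ≠ List.replicate j Dir.left ++ Dir.right :: s := by
  intro h
  have := congrArg (List.count Dir.right) h
  simp [List.count_replicate, List.count_append, List.count_cons] at this

lemma not_end_left_cons {d : Dir} {r : Pos}
    (h : ∀ r' : Pos, r ≠ r' ++ [Dir.left])
    (hd : d ≠ Dir.left ∨ r ≠ []) :
    ∀ r' : Pos, d :: r ≠ r' ++ [Dir.left] := by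
  intro r' heq
  cases r' with
  | nil =>
      simp at heq
      rcases hd with hd | hd
      · exact hd heq.1
      · exact hd heq.2
  | cons e r'' =>
      simp at heq
      exact h r'' heq.2

/-- headed occurrence decomposition: an occurrence of `y ≠ x` inside a term
headed by `x` lies inside one of the arguments. -/
lemma headed_occ {x y : ℕ} {a : Lam} (hxy : x ≠ y) (h : Headed x a) :
    ∀ {s : Pos}, OccOf y a s →
    ∃ j s'' m, s = List.replicate j Dir.left ++ Dir.right :: s'' ∧ j < m ∧
      subtermAt a (List.replicate m Dir.left) = some (var x) := by
  induction h with
  | var =>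
      intro s hs
      cases s with
      | nil => simp [OccOf, subtermAt] at hs; omega
      | cons d q => cases d <;> simp [OccOf, subtermAt] at hs
  | @app a b hh ih =>
      intro s hs
      cases s with
      | nil => simp [OccOf, subtermAt] at hs
      | cons d q =>
          cases d with
          | left =>
              have hq : OccOf y a q := by
                simpa [OccOf, subtermAt, List.count_cons] using hs
              obtain ⟨j, s'', m, rfl, hjm, hm⟩ := ih hq
              exact ⟨j + 1, s'', m + 1, by simp [List.replicate_succ],
                by omega, by simpa [List.replicate_succ, subtermAt] using hm⟩
          | right =>
              obtain ⟨m, hm⟩ := headed_spine hh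
              exact ⟨0, q, m + 1, by simp, by omega,
                by simpa [List.replicate_succ, subtermAt] using hm⟩
          | down => simp [OccOf, subtermAt] at hs

lemma guard_occ_inArg : ∀ {w : Lam} {p' : Pos} {x y : ℕ}, x ≠ y →
    Guard x y w → OccOf y w p' →
    ∃ q', q' ≠ p' ∧ InArgOfOcc x w p' q' := by
  intro w
  induction w with
  | var n =>
      intro p' x y hxy hg ho
      cases p' with
      | nil => simp [OccOf, subtermAt] at ho; simp [Guard] at hg; omega
      | cons d q => cases d <;> simp [OccOf, subtermAt] at ho
  | app a b iha ihb =>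
      intro p' x y hxy hg ho
      cases p' with
      | nil => simp [OccOf, subtermAt] at ho
      | cons d q =>
          cases d with
          | left =>
              have hq : OccOf y a q := by
                simpa [OccOf, subtermAt, List.count_cons] using ho
              cases hg with
              | inl hh =>
                  obtain ⟨j, s'', m, rfl, hjm, hm⟩ := headed_occ hxy hh hq
                  refine ⟨List.replicate (m + 1) Dir.left, ?_, ?_, [],
                    m + 1, by simp, by simp, j + 1, s'', by omega,
                    by simp [List.replicate_succ]⟩
                  · intro h
                    exact replicate_left_ne (m + 1) (j + 1)
                      s'' (h.trans (by simp [List.replicate_succ]))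
                  · show subtermAt (app a b) _ = _
                    simp only [OccOf, List.replicate_succ, subtermAt]
                    simpa [List.count_replicate] using hm
              | inr hg =>
                  obtain ⟨q'', hne, hoq, r₀, n₀, rfl, hrmax, j₀, s₀, hj₀, hs⟩ :=
                    iha hxy hg.1 hq
                  by_cases hr : r₀ = []
                  · subst hr
                    simp only [List.nil_append] at hs ⊢
                    refine ⟨Dir.left :: (List.replicate n₀ Dir.left), ?_, ?_, [],
                      n₀ + 1, by simp [List.replicate_succ], by simp,
                      j₀ + 1, s₀, by omega, by simp [hs, List.replicate_succ]⟩
                    · simpa using hne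
                    · show OccOf x (app a b) _
                      simpa [OccOf, subtermAt, List.count_cons] using hoq
                  · refine ⟨Dir.left :: (r₀ ++ List.replicate n₀ Dir.left),
                      by simpa using hne, ?_, Dir.left :: r₀, n₀, by simp,
                      not_end_left_cons hrmax (Or.inr hr), j₀, s₀, hj₀,
                      by simp [hs]⟩
                    show OccOf x (app a b) _
                    simpa [OccOf, subtermAt, List.count_cons] using hoq
          | right =>
              have hq : OccOf y b q := by
                simpa [OccOf, subtermAt, List.count_cons] using ho
              cases hg with
              | inl hh =>
                  obtain ⟨m, hm⟩ := headed_spine hh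
                  refine ⟨List.replicate (m + 1) Dir.left, ?_, ?_, [],
                    m + 1, by simp, by simp, 0, q, by omega, by simp⟩
                  · intro h
                    exact replicate_left_ne (m + 1) 0 q (by simpa using h)
                  · show subtermAt (app a b) _ = _
                    simp only [OccOf, List.replicate_succ, subtermAt]
                    simpa [List.count_replicate] using hm
              | inr hg =>
                  obtain ⟨q'', hne, hoq, r₀, n₀, rfl, hrmax, j₀, s₀, hj₀, hs⟩ :=
                    ihb hxy hg.2 hq
                  refine ⟨Dir.right :: (r₀ ++ List.replicate n₀ Dir.left),
                    by simpa using hne, ?_, Dir.right :: r₀, n₀, by simp,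
                    not_end_left_cons hrmax (Or.inl (by simp)), j₀, s₀, hj₀,
                    by simp [hs]⟩
                  show OccOf x (app a b) _
                  simpa [OccOf, subtermAt, List.count_cons] using hoq
          | down => simp [OccOf, subtermAt] at ho
  | abs a ih =>
      intro p' x y hxy hg ho
      cases p' with
      | nil => simp [OccOf, subtermAt] at ho
      | cons d q =>
          cases d with
          | left => simp [OccOf, subtermAt] at ho
          | right => simp [OccOf, subtermAt] at ho
          | down =>
              have hq : OccOf (y + 1) a q := by
                simp only [OccOf, subtermAt] at ho ⊢
                rw [ho]; congr 1; simp [List.count_cons]; omega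
              obtain ⟨q'', hne, hoq, r₀, n₀, rfl, hrmax, j₀, s₀, hj₀, hs⟩ :=
                ih (by omega) hg hq
              refine ⟨Dir.down :: (r₀ ++ List.replicate n₀ Dir.left),
                by simpa using hne, ?_, Dir.down :: r₀, n₀, by simp,
                not_end_left_cons hrmax (Or.inl (by simp)), j₀, s₀, hj₀,
                by simp [hs]⟩
              show OccOf x (Lam.abs a) _
              simp only [OccOf, subtermAt] at hoq ⊢
              rw [hoq]; congr 1; simp [List.count_cons]; omega

lemma rename_subtermAt : ∀ (p : Pos) (t : Lam) (y x : ℕ),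
    subtermAt (rename y x t) p =
      (subtermAt t p).map (rename (y + p.count Dir.down) (x + p.count Dir.down)) := by
  intro p
  induction p with
  | nil =>
      intro t y x; simp [subtermAt]
  | cons d q ih =>
      intro t y x
      cases t with
      | var n =>
          cases d <;> simp [rename, subtermAt] <;> split <;> simp [subtermAt]
      | app a b =>
          cases d <;> simp [rename, subtermAt, ih, List.count_cons]
      | abs a =>
          have hc : (Dir.down :: q).count Dir.down = q.count Dir.down + 1 := by
            simp [List.count_cons]
          have e1 : y + 1 + q.count Dir.down = y + (q.count Dir.down + 1) := by omega
          have e2 : x + 1 + q.count Dir.down = x + (q.count Dir.down + 1) := by omega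
          cases d with
          | left => simp [rename, subtermAt]
          | right => simp [rename, subtermAt]
          | down => simp only [rename, subtermAt, ih, hc, e1, e2]

lemma occ_rename {x y : ℕ} {v : Lam} {q : Pos} (h : OccOf x v q) :
    OccOf x (rename y x v) q := by
  simp only [OccOf] at h ⊢
  rw [rename_subtermAt, h]
  simp only [Option.map_some, rename]
  split <;> rfl


end LamAux


open Lam LamAux in
/-- if `t ▷* t'`, the occurrence `p'` of `x` in `t'` is a residue of
the occurrence `p` of `x` in `t`, and `p'` is pure in `t'`, then `p` is pure in `t`. -/
theorem pure_of_pure_residue (x : ℕ) (t t' : Lam) (p p' : Pos)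
    (hred : Steps t t') (hocc : OccOf x t p) (hocc' : OccOf x t' p')
    (hres : Residue x t t' p p')
    (hpure : PureOcc x t' p') :
    PureOcc x t p := by
  refine ⟨hocc, ?_⟩
  intro q hq hIn
  obtain ⟨y, u₀, v₀, hfy, hrep, hsteps, hren, hoccy⟩ := hres
  have hxy : x ≠ y := fun h => hfy (h ▸ occ_free hocc)
  obtain ⟨hoccq, r, n, rfl, hrmax, j, s, hjn, hp⟩ := hIn
  have hsubq : subtermAt t (r ++ List.replicate n Dir.left)
      = some (var (x + r.count Dir.down)) := by
    simpa [OccOf, List.count_append, List.count_replicate] using hoccq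
  rw [hp, List.append_assoc] at hrep
  obtain ⟨c, c', hc, hc', hcrep⟩ := replace_split hrep
  have hcn : subtermAt c (List.replicate n Dir.left)
      = some (var (x + r.count Dir.down)) := by
    rw [subtermAt_append, hc] at hsubq; simpa using hsubq
  obtain ⟨A, B, rfl, hA⟩ := spine_replace hjn hcn hc'
  have hGu₀ : Guard x y u₀ := guard_replace r hcrep hfy (Or.inl hA)
  have hGv₀ : Guard x y v₀ := guard_steps hsteps hGu₀
  obtain ⟨q', hq'ne, hInv⟩ := guard_occ_inArg hxy hGv₀ hoccy
  obtain ⟨hoq', r₁, n₁, hq₁, hr₁, j₁, s₁, hj₁, hp₁⟩ := hInv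
  exact hpure.2 q' hq'ne
    ⟨hren ▸ occ_rename hoq', r₁, n₁, hq₁, hr₁, j₁, s₁, hj₁, hp₁⟩
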